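/- arXiv:0812.1407 — 3 statements merged into one kernel-verified Lean document; each statement's English description precedes it below -/
import Mathlib

section
/- Let (Gᵢ, pᵢ) be an inverse sequence of groups and Hᵢ ≤ Gᵢ subgroups with pᵢ(Hᵢ₊₁) ⊆ Hᵢ for all i. If the induced inverse sequence of pointed coset spaces Gᵢ/Hᵢ (pointed at the coset Hᵢ) satisfies the Mittag-Leffler condition, then the inclusion-induced map of pointed sets lim¹ Hᵢ → lim¹ Gᵢ is surjective. -/
/-- An inverse sequence of groups `⋯ → G₂ → G₁ → G₀`, presented by its compatible
composite bonding homomorphisms `bond h : G j →* G i` for `i ≤ j`; the one-step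
bonding maps `pᵢ` are `bond (Nat.le_succ i) : G (i+1) →* G i`. -/
structure GroupInvSeq (G : ℕ → Type) [∀ i, Group (G i)] : Type where
  bond : ∀ ⦃i j : ℕ⦄, i ≤ j → (G j →* G i)
  bond_refl : ∀ i, bond (le_refl i) = MonoidHom.id (G i)
  bond_comp : ∀ ⦃i j k : ℕ⦄ (hij : i ≤ j) (hjk : j ≤ k),
    (bond hij).comp (bond hjk) = bond (hij.trans hjk)

namespace GroupInvSeq

variable {G : ℕ → Type} [∀ i, Group (G i)]

/-- The orbit relation on `∏ᵢ Gᵢ` of the right action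
`(g₀,g₁,…)·(x₀,x₁,…) = (x₀⁻¹g₀p₀(x₁), x₁⁻¹g₁p₁(x₂), …)`; its orbit set is `lim¹`. -/
def lim1Rel (S : GroupInvSeq G) (g g' : ∀ i, G i) : Prop :=
  ∃ x : ∀ i, G i, ∀ i, g' i = (x i)⁻¹ * g i * S.bond (Nat.le_succ i) (x (i + 1))

/-- The derived limit `lim¹` of an inverse sequence of groups: the orbit set of the
action above, pointed at the class of the identity. -/
def lim1 (S : GroupInvSeq G) : Type :=
  Quot S.lim1Rel

/-- The corresponding orbit relation for the inverse sequence of subgroups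
`Hᵢ ≤ Gᵢ` (with the restricted bonding maps); its orbit set is `lim¹ Hᵢ`. -/
def lim1RelSub (S : GroupInvSeq G) (H : ∀ i, Subgroup (G i))
    (h h' : ∀ i, ↥(H i)) : Prop :=
  ∃ x : ∀ i, ↥(H i), ∀ i,
    (h' i : G i) = (x i : G i)⁻¹ * (h i : G i) *
      S.bond (Nat.le_succ i) (x (i + 1) : G (i + 1))

/-- The map `lim¹ Hᵢ → lim¹ Gᵢ` induced by the inclusions `Hᵢ ↪ Gᵢ`, sending the
class of `(h₀,h₁,…)` to its class in `lim¹ Gᵢ`. -/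
def lim1incl (S : GroupInvSeq G) (H : ∀ i, Subgroup (G i)) :
    Quot (S.lim1RelSub H) → S.lim1 :=
  Quot.lift (fun h => Quot.mk S.lim1Rel fun i => (h i : G i))
    (fun h h' hr => by
      obtain ⟨x, hx⟩ := hr
      exact Quot.sound ⟨fun i => (x i : G i), fun i => hx i⟩)

end GroupInvSeq

/-! The class of `g` is hit as soon as there are `xᵢ ∈ Gᵢ` with `xᵢ⁻¹ gᵢ pᵢ(xᵢ₊₁) ∈ Hᵢ`, i.e.
`xᵢHᵢ = gᵢ pᵢ(xᵢ₊₁)Hᵢ`: a thread of cosets for the bonding maps twisted by `g`. The twisted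
composites are `y ↦ cᵢₖ pᵏᵢ(y)` with `cᵢₖ = gᵢ pᵢ(gᵢ₊₁) ⋯ pᵏ⁻¹ᵢ(gₖ₋₁)`, so their images in
`Gᵢ/Hᵢ` are the translates `cᵢₖ · pᵏᵢ(Gₖ)Hᵢ`. Since `cᵢₖ = cᵢⱼ pʲᵢ(cⱼₖ)` and `pʲᵢ(cⱼₖ)` preserves
`pʲᵢ(Gⱼ)Hᵢ`, these images stabilise along with the untwisted ones, and a thread is then chosen
step by step inside the stable images. -/

theorem exists_seq_of_forall_exists {X : ℕ → Type*} (P : ∀ i, X i → Prop)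
    (R : ∀ i, X i → X (i + 1) → Prop) (h₀ : ∃ x, P 0 x)
    (hstep : ∀ i x, P i x → ∃ y, P (i + 1) y ∧ R i x y) :
    ∃ x : ∀ i, X i, ∀ i, R i (x i) (x (i + 1)) := by
  choose next hnext hR using hstep
  obtain ⟨x₀, hx₀⟩ := h₀
  let x : ∀ i, {x : X i // P i x} := fun i =>
    Nat.rec ⟨x₀, hx₀⟩ (fun i y => ⟨next i y.1 y.2, hnext i y.1 y.2⟩) i
  exact ⟨fun i => (x i).1, fun i => hR i (x i).1 (x i).2⟩

section StableRange

variable {X Y : ℕ → Type*} (q : ∀ ⦃i k : ℕ⦄, i ≤ k → X k → X i)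
  (hq : ∀ ⦃i j k : ℕ⦄ (hij : i ≤ j) (hjk : j ≤ k) (x : X k),
    q hij (q hjk x) = q (hij.trans hjk) x)
  (π : ∀ i, X i → Y i) {j : ℕ → ℕ} (hj : ∀ i, i ≤ j i)
  (hML : ∀ i k (hk : j i < k),
    Set.range (π i ∘ q ((hj i).trans hk.le)) = Set.range (π i ∘ q (hj i)))
include hq hML

theorem exists_lift_mem_stableRange {i : ℕ} {x : X i}
    (hx : π i x ∈ Set.range (π i ∘ q (hj i))) :
    ∃ y : X (i + 1), π (i + 1) y ∈ Set.range (π (i + 1) ∘ q (hj (i + 1))) ∧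
      π i x = π i (q (Nat.le_succ i) y) := by
  -- both stable images are already attained from level `max (j i) (j (i + 1)) + 1`
  have hk : j i < max (j i) (j (i + 1)) + 1 := Nat.lt_succ_of_le (le_max_left _ _)
  have hk' : j (i + 1) < max (j i) (j (i + 1)) + 1 := Nat.lt_succ_of_le (le_max_right _ _)
  rw [← hML i _ hk] at hx
  obtain ⟨z, hz⟩ := hx
  refine ⟨q ((hj (i + 1)).trans hk'.le) z, ?_, ?_⟩
  · rw [← hML (i + 1) _ hk']
    exact ⟨z, rfl⟩
  · rw [hq, ← hz]
    rfl

theorem exists_thread_of_range_stable [∀ i, Nonempty (X i)] :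
    ∃ x : ∀ i, X i, ∀ i, π i (x i) = π i (q (Nat.le_succ i) (x (i + 1))) :=
  exists_seq_of_forall_exists (fun i x => π i x ∈ Set.range (π i ∘ q (hj i)))
    (fun i x y => π i x = π i (q (Nat.le_succ i) y))
    ⟨q (hj 0) (Classical.arbitrary _), _, rfl⟩
    (fun _ _ hx => exists_lift_mem_stableRange q hq π hj hML hx)

end StableRange

section QuotientRange

open scoped Pointwise

variable {A G : Type*} [Group A] [Group G] (N : Subgroup G) (φ : A →* G)

theorem range_mk_mul_apply (a : G) :
    Set.range (fun y => (a * φ y : G ⧸ N)) = a • Set.range (fun y => (φ y : G ⧸ N)) := by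
  rw [Set.smul_set_range]
  rfl

theorem smul_range_mk_apply_of_mem {a : G} (ha : a ∈ φ.range) :
    a • Set.range (fun y => (φ y : G ⧸ N)) = Set.range (fun y => (φ y : G ⧸ N)) := by
  obtain ⟨b, rfl⟩ := ha
  rw [← range_mk_mul_apply]
  simp_rw [← map_mul]
  exact (Equiv.mulLeft b).surjective.range_comp (fun y => (φ y : G ⧸ N))

end QuotientRange

namespace GroupInvSeq

variable {G : ℕ → Type} [∀ i, Group (G i)] (S : GroupInvSeq G)

theorem bond_bond ⦃i j k : ℕ⦄ (hij : i ≤ j) (hjk : j ≤ k) (z : G k) :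
    S.bond hij (S.bond hjk z) = S.bond (hij.trans hjk) z :=
  DFunLike.congr_fun (S.bond_comp hij hjk) z

theorem bond_self (i : ℕ) (x : G i) : S.bond le_rfl x = x :=
  DFunLike.congr_fun (S.bond_refl i) x

theorem mk_mem_range_lim1incl (H : ∀ i, Subgroup (G i)) {g : ∀ i, G i}
    (h : ∃ x : ∀ i, G i, ∀ i, (x i)⁻¹ * g i * S.bond (Nat.le_succ i) (x (i + 1)) ∈ H i) :
    Quot.mk S.lim1Rel g ∈ Set.range (lim1incl S H) := by
  obtain ⟨x, hx⟩ := h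
  exact ⟨Quot.mk _ fun i => ⟨_, hx i⟩, (Quot.sound ⟨x, fun _ => rfl⟩).symm⟩

variable (g : ∀ i, G i)

/-- `twistProd g i k = gᵢ pᵢ(gᵢ₊₁) ⋯ pᵏ⁻¹ᵢ(gₖ₋₁)` for `i ≤ k`, and `1` for `k < i`. -/
def twistProd (i : ℕ) : ℕ → G i
  | 0 => 1
  | k + 1 => if h : i ≤ k then twistProd i k * S.bond h (g k) else 1

theorem twistProd_self (i : ℕ) : S.twistProd g i i = 1 := by
  cases i with
  | zero => rfl
  | succ n => simp [twistProd, Nat.not_succ_le_self n]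

theorem twistProd_succ {i k : ℕ} (h : i ≤ k) :
    S.twistProd g i (k + 1) = S.twistProd g i k * S.bond h (g k) := by
  simp [twistProd, h]

theorem twistProd_succ_self (i : ℕ) : S.twistProd g i (i + 1) = g i := by
  rw [twistProd_succ S g le_rfl, twistProd_self, one_mul, bond_self]

theorem twistProd_trans {i j k : ℕ} (hij : i ≤ j) (hjk : j ≤ k) :
    S.twistProd g i k = S.twistProd g i j * S.bond hij (S.twistProd g j k) := by
  induction k, hjk using Nat.le_induction with
  | base => rw [twistProd_self, map_one, mul_one]
  | succ n hn ih =>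
    rw [twistProd_succ S g (hij.trans hn), twistProd_succ S g hn, map_mul, ih,
      bond_bond, mul_assoc]

def twistedBond ⦃i k : ℕ⦄ (h : i ≤ k) (y : G k) : G i :=
  S.twistProd g i k * S.bond h y

theorem twistedBond_twistedBond ⦃i j k : ℕ⦄ (hij : i ≤ j) (hjk : j ≤ k) (y : G k) :
    S.twistedBond g hij (S.twistedBond g hjk y) = S.twistedBond g (hij.trans hjk) y := by
  rw [twistedBond, twistedBond, twistedBond, map_mul, bond_bond, twistProd_trans S g hij hjk,
    mul_assoc]

theorem twistedBond_succ (i : ℕ) (y : G (i + 1)) :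
    S.twistedBond g (Nat.le_succ i) y = g i * S.bond (Nat.le_succ i) y := by
  rw [twistedBond, twistProd_succ_self]

open scoped Pointwise in
theorem range_mk_twistedBond_eq (H : ∀ i, Subgroup (G i)) {i j k : ℕ} (hij : i ≤ j)
    (hjk : j ≤ k)
    (hML : Set.range (fun y : G k => (S.bond (hij.trans hjk) y : G i ⧸ H i)) =
      Set.range (fun y : G j => (S.bond hij y : G i ⧸ H i))) :
    Set.range (fun y : G k => (S.twistedBond g (hij.trans hjk) y : G i ⧸ H i)) =
      Set.range (fun y : G j => (S.twistedBond g hij y : G i ⧸ H i)) := by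
  simp only [twistedBond]
  rw [range_mk_mul_apply, range_mk_mul_apply, hML, twistProd_trans S g hij hjk, mul_smul,
    smul_range_mk_apply_of_mem _ _ (MonoidHom.mem_range.2 ⟨_, rfl⟩)]

end GroupInvSeq

open GroupInvSeq in
theorem lim1incl_surjective_of_coset_mittagLeffler_general
    {G : ℕ → Type} [∀ i, Group (G i)]
    (S : GroupInvSeq G) (H : ∀ i, Subgroup (G i))
    (hML : ∀ i, ∃ j, ∃ hij : i < j, ∀ k, ∀ hjk : j < k,
      Set.range (fun g : G k =>
        (QuotientGroup.mk (S.bond (hij.le.trans hjk.le) g) : G i ⧸ H i)) =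
      Set.range (fun g : G j =>
        (QuotientGroup.mk (S.bond hij.le g) : G i ⧸ H i))) :
    Function.Surjective (lim1incl S H) := by
  rintro ⟨g⟩
  choose j hij hML using hML
  obtain ⟨x, hx⟩ := exists_thread_of_range_stable (S.twistedBond g) (S.twistedBond_twistedBond g)
    (fun i (y : G i) => (y : G i ⧸ H i)) (fun i => (hij i).le)
    (fun i k hk => S.range_mk_twistedBond_eq g H (hij i).le hk.le (hML i k hk))
  refine S.mk_mem_range_lim1incl H ⟨x, fun i => ?_⟩
  rw [mul_assoc, ← QuotientGroup.eq, ← twistedBond_succ]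
  exact hx i

open GroupInvSeq in
/-- If the induced inverse sequence of pointed coset spaces `Gᵢ/Hᵢ` satisfies the
Mittag-Leffler condition, then the inclusion-induced map `lim¹ Hᵢ → lim¹ Gᵢ` is
surjective. -/
theorem lim1incl_surjective_of_coset_mittagLeffler
    {G : ℕ → Type} [∀ i, Group (G i)]
    (S : GroupInvSeq G) (H : ∀ i, Subgroup (G i))
    (hH : ∀ i, ∀ x ∈ H (i + 1), S.bond (Nat.le_succ i) x ∈ H i)
    (hML : ∀ i, ∃ j, ∃ hij : i < j, ∀ k, ∀ hjk : j < k,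
      Set.range (fun g : G k =>
        (QuotientGroup.mk (S.bond (hij.le.trans hjk.le) g) : G i ⧸ H i)) =
      Set.range (fun g : G j =>
        (QuotientGroup.mk (S.bond hij.le g) : G i ⧸ H i))) :
    Function.Surjective (lim1incl S H) :=
  lim1incl_surjective_of_coset_mittagLeffler_general S H hML
end

section
/- Let (⋯ → G₂ → G₁ → G₀) be an inverse sequence of pointed sets that either is an inverse sequence of groups and group homomorphisms or has every Gᵢ finite. If the inverse limit lim Gᵢ is discrete in the inverse limit topology (each Gᵢ carrying the discrete topology), then the projection lim Gᵢ → G_k is injective for some k. -/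
/-!
A neighbourhood of a point in a product of discrete spaces constrains only finitely many
coordinates, and two threads that agree at coordinate `N` agree at every `i ≤ N`. Hence a thread
that is isolated in the limit is already isolated by a single coordinate. For groups, apply this
to the identity thread and translate: threads are closed under `g / g'`. For finite terms, the
limit is closed in a compact product, so a discrete limit is finite, and its finitely many pairs
of distinct threads are separated below a common level.
-/

/-- An inverse sequence of pointed sets `⋯ → X₂ → X₁ → X₀`, presented by its
compatible composite basepoint-preserving bonding maps `bond h : X j → X i` for
`i ≤ j`; the one-step bonding maps are `bond (Nat.le_succ i) : X (i+1) → X i`. -/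
structure PointedInvSeq (X : ℕ → Type) (pt : ∀ i, X i) : Type where
  bond : ∀ ⦃i j : ℕ⦄, i ≤ j → X j → X i
  bond_refl : ∀ i (x : X i), bond (le_refl i) x = x
  bond_comp : ∀ ⦃i j k : ℕ⦄ (hij : i ≤ j) (hjk : j ≤ k) (x : X k),
    bond (hij.trans hjk) x = bond hij (bond hjk x)
  bond_pt : ∀ ⦃i j : ℕ⦄ (h : i ≤ j), bond h (pt j) = pt i

open Function Topology

theorem exists_forall_le_eq_subset_of_mem_nhds {X : ℕ → Type*} [∀ i, TopologicalSpace (X i)]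
    [∀ i, DiscreteTopology (X i)] {g : ∀ i, X i} {U : Set (∀ i, X i)} (hU : U ∈ 𝓝 g) :
    ∃ N, {f | ∀ i ≤ N, f i = g i} ⊆ U := by
  simp only [nhds_pi, nhds_discrete, Filter.mem_pi', Filter.mem_pure] at hU
  obtain ⟨I, t, hgt, hIt⟩ := hU
  refine ⟨I.sup id, fun f hf => hIt fun i hi => ?_⟩
  rw [hf i (Finset.le_sup (f := id) hi)]
  exact hgt i

namespace PointedInvSeq

variable {X : ℕ → Type} {pt : ∀ i, X i} (S : PointedInvSeq X pt)

def IsThread (g : ∀ i, X i) : Prop :=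
  ∀ i, S.bond (Nat.le_succ i) (g (i + 1)) = g i

variable {S}

theorem IsThread.bond_eq {g : ∀ i, X i} (hg : S.IsThread g) {i j : ℕ} (h : i ≤ j) :
    S.bond h (g j) = g i := by
  induction j, h using Nat.le_induction with
  | base => exact S.bond_refl i _
  | succ j hij ih => rw [S.bond_comp hij (Nat.le_succ j), hg j, ih]

theorem IsThread.apply_eq_of_le {g g' : ∀ i, X i} (hg : S.IsThread g) (hg' : S.IsThread g')
    {i k : ℕ} (hik : i ≤ k) (hk : g k = g' k) : g i = g' i := by
  rw [← hg.bond_eq hik, ← hg'.bond_eq hik, hk]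

variable (S)

theorem exists_injective_apply_of_finite [Finite {g // S.IsThread g}] :
    ∃ k, Injective fun g : {g // S.IsThread g} => g.1 k := by
  have hsep : ∀ p : {p : {g // S.IsThread g} × {g // S.IsThread g} // p.1 ≠ p.2},
      ∃ n, p.1.1.1 n ≠ p.1.2.1 n := fun p =>
    not_forall.mp fun h => p.2 (Subtype.ext (funext h))
  choose n hn using hsep
  obtain ⟨k, hk⟩ := Finite.bddAbove_range n
  refine ⟨k, fun g g' hgg' => by_contra fun hne => hn ⟨(g, g'), hne⟩ ?_⟩
  exact g.2.apply_eq_of_le g'.2 (hk (Set.mem_range_self _)) hgg'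

section Topology

variable [∀ i, TopologicalSpace (X i)] [∀ i, DiscreteTopology (X i)]

theorem isClosed_setOf_isThread : IsClosed {g : ∀ i, X i | S.IsThread g} := by
  simp only [IsThread, Set.ofPred_forall]
  exact isClosed_iInter fun i =>
    isClosed_eq (continuous_of_discreteTopology.comp (continuous_apply _)) (continuous_apply i)

theorem finite_of_discreteTopology [∀ i, Finite (X i)] [DiscreteTopology {g // S.IsThread g}] :
    Finite {g // S.IsThread g} :=
  have : CompactSpace {g // S.IsThread g} :=
    isCompact_iff_compactSpace.mp S.isClosed_setOf_isThread.isCompact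
  finite_of_compact_of_discrete

theorem exists_eq_of_apply_eq_of_isOpen_singleton {g : {g // S.IsThread g}}
    (hg : IsOpen {g}) : ∃ N, ∀ g' : {g // S.IsThread g}, g'.1 N = g.1 N → g' = g := by
  obtain ⟨U, hU, hUg⟩ := (mem_nhds_subtype _ g _).mp (hg.mem_nhds rfl)
  obtain ⟨N, hN⟩ := exists_forall_le_eq_subset_of_mem_nhds hU
  exact ⟨N, fun g' hg' => hUg (hN fun i hi => g'.2.apply_eq_of_le g.2 hi hg')⟩

end Topology

section Group

variable [∀ i, Group (X i)]

def BondMapMul : Prop :=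
  ∀ ⦃i j : ℕ⦄ (h : i ≤ j) (x y : X j), S.bond h (x * y) = S.bond h x * S.bond h y

variable {S}

@[simps!]
def bondHom (hmul : S.BondMapMul) {i j : ℕ} (h : i ≤ j) : X j →* X i :=
  MonoidHom.mk' (S.bond h) (hmul h)

theorem isThread_one (hmul : S.BondMapMul) : S.IsThread (1 : ∀ i, X i) :=
  fun i => map_one (bondHom hmul (Nat.le_succ i))

theorem IsThread.div (hmul : S.BondMapMul) {g g' : ∀ i, X i} (hg : S.IsThread g)
    (hg' : S.IsThread g') : S.IsThread (g / g') := fun i => by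
  simpa [← hg i, ← hg' i] using map_div (bondHom hmul (Nat.le_succ i)) (g (i + 1)) (g' (i + 1))

variable (S) in
theorem exists_injective_apply_of_group [∀ i, TopologicalSpace (X i)]
    [∀ i, DiscreteTopology (X i)] [DiscreteTopology {g // S.IsThread g}] (hmul : S.BondMapMul) :
    ∃ k, Injective fun g : {g // S.IsThread g} => g.1 k := by
  obtain ⟨N, hN⟩ := S.exists_eq_of_apply_eq_of_isOpen_singleton
    (g := ⟨1, isThread_one hmul⟩) (isOpen_discrete _)
  refine ⟨N, fun g g' hgg' => Subtype.ext (div_eq_one.mp ?_)⟩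
  exact congrArg Subtype.val (hN ⟨_, g.2.div hmul g'.2⟩ (div_eq_one.mpr hgg'))

end Group

end PointedInvSeq

/-- If an inverse sequence of pointed sets either consists of groups and group
homomorphisms or has all terms finite, and its inverse limit (topologized as a
subspace of the product of the discrete spaces `Xᵢ`) is discrete, then the
projection of the inverse limit to `X k` is injective for some `k`. -/
theorem lim_injects_of_discrete
    {X : ℕ → Type} (pt : ∀ i, X i) (S : PointedInvSeq X pt)
    [∀ i, TopologicalSpace (X i)] [∀ i, DiscreteTopology (X i)]
    (hcase : (∀ i, Finite (X i)) ∨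
      ∃ grp : ∀ i, Group (X i),
        (∀ i, pt i = (letI := grp i; (1 : X i))) ∧
        ∀ ⦃i j : ℕ⦄ (h : i ≤ j) (x y : X j),
          S.bond h (letI := grp j; x * y) =
            (letI := grp i; S.bond h x * S.bond h y))
    (hdisc : DiscreteTopology
      {g : ∀ i, X i // ∀ i, S.bond (Nat.le_succ i) (g (i + 1)) = g i}) :
    ∃ k, Function.Injective
      (fun g : {g : ∀ i, X i // ∀ i, S.bond (Nat.le_succ i) (g (i + 1)) = g i} =>
        g.1 k) := by
  have : DiscreteTopology {g // S.IsThread g} := hdisc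
  rcases hcase with hfin | ⟨grp, -, hmul⟩
  · have := S.finite_of_discreteTopology
    exact S.exists_injective_apply_of_finite
  · exact S.exists_injective_apply_of_group hmul
end

section
/- Let X be a compact metric space and p : X̃ → X a covering map all of whose fibers are finite (a finite-sheeted covering). Then p admits an overlay structure, and any two overlay structures on p are equivalent. -/
/-- The data exhibiting `p : E → X` as a covering map: an open cover `{U_α}` of `X`,
with `p⁻¹(U_α)` a disjoint union of open sets `U_α^λ` each mapped homeomorphically
onto `U_α` by `p`. -/
structure CoverData {E X : Type} [TopologicalSpace E] [TopologicalSpace X]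
    (p : E → X) : Type 1 where
  ι : Type
  base : ι → Set X
  base_open : ∀ a, IsOpen (base a)
  base_cover : ∀ x : X, ∃ a, x ∈ base a
  Λ : ι → Type
  sheet : ∀ a, Λ a → Set E
  sheet_open : ∀ a l, IsOpen (sheet a l)
  sheet_disjoint : ∀ a, ∀ l l' : Λ a, l ≠ l' → Disjoint (sheet a l) (sheet a l')
  sheet_preimage : ∀ a, p ⁻¹' (base a) = ⋃ l, sheet a l
  sheet_homeo : ∀ a l, ∃ e : (sheet a l) ≃ₜ (base a),
    ∀ z : (sheet a l), (e z : X) = p z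

/-- An overlay structure on a covering map: an indexed cover `{U_α^λ}` of the total
space lying over an open cover of the base, such that whenever `U_α^λ ∩ U_β^μ ≠ ∅`
and `U_α^λ ∩ U_β^ν ≠ ∅` one has `μ = ν`. -/
structure OverlayStructure {E X : Type} [TopologicalSpace E] [TopologicalSpace X]
    (p : E → X) extends CoverData p : Type 1 where
  overlay : ∀ a b (l : Λ a) (μ ν : Λ b),
    (sheet a l ∩ sheet b μ).Nonempty → (sheet a l ∩ sheet b ν).Nonempty → μ = ν

/-- `O` refines `O'` (as covers of the total space) if every sheet of `O` is
contained in some sheet of `O'`. -/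
def OverlayStructure.Refines {E X : Type} [TopologicalSpace E] [TopologicalSpace X]
    {p : E → X} (O O' : OverlayStructure p) : Prop :=
  ∀ a l, ∃ b m, O.sheet a l ⊆ O'.sheet b m

/-- Two overlay structures on `p` are equivalent if some overlay structure on `p`
refines both of them. -/
def OverlayStructure.Equiv {E X : Type} [TopologicalSpace E] [TopologicalSpace X]
    {p : E → X} (O O' : OverlayStructure p) : Prop :=
  ∃ O'' : OverlayStructure p, O''.Refines O ∧ O''.Refines O'

/-!
Finite fibres over a compact base make the total space `E` compact Hausdorff, so `E` carries a
uniformity compatible with its topology. Choose a symmetric open entourage `V` so small that every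
`V`-ball lies in a sheet of each of two given covers and no chain of four `V`-steps joins two
distinct points of one fibre; by compactness there is `r > 0` with `B(p w, r) ⊆ p (V[w])` for all
`w`. The sets `V[z] ∩ p⁻¹ B(x, r)`, for `z` in the fibre over `x`, are then the sheets over
`B(x, r)` of an overlay structure refining both covers.
-/

open Set Topology Filter UniformSpace
open scoped Uniformity SetRel

namespace CoverData

variable {E X : Type} [TopologicalSpace E] [TopologicalSpace X] {p : E → X}

theorem exists_mem_sheet (D : CoverData p) (w : E) : ∃ a l, w ∈ D.sheet a l := by
  obtain ⟨a, ha⟩ := D.base_cover (p w)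
  have hw : w ∈ ⋃ l, D.sheet a l := D.sheet_preimage a ▸ ha
  obtain ⟨l, hl⟩ := mem_iUnion.mp hw
  exact ⟨a, l, hl⟩

theorem sheet_subset_preimage_base (D : CoverData p) (a) (l) : D.sheet a l ⊆ p ⁻¹' D.base a :=
  D.sheet_preimage a ▸ subset_iUnion (D.sheet a) l

theorem image_sheet (D : CoverData p) (a) (l) : p '' D.sheet a l = D.base a := by
  obtain ⟨e, he⟩ := D.sheet_homeo a l
  refine (image_subset_iff.mpr (D.sheet_subset_preimage_base a l)).antisymm fun x hx => ?_
  exact ⟨e.symm ⟨x, hx⟩, (e.symm ⟨x, hx⟩).2, by rw [← he, e.apply_symm_apply]⟩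

theorem isOpenEmbedding_domRestrict_sheet (D : CoverData p) (a) (l) :
    IsOpenEmbedding ((D.sheet a l).domRestrict p) := by
  obtain ⟨e, he⟩ := D.sheet_homeo a l
  have : (D.sheet a l).domRestrict p = Subtype.val ∘ e := funext fun z => (he z).symm
  rw [this]
  exact (D.base_open a).isOpenEmbedding_subtypeVal.comp e.isOpenEmbedding

theorem isLocalHomeomorph (D : CoverData p) : IsLocalHomeomorph p :=
  isLocalHomeomorph_iff_isOpenEmbedding_restrict.mpr fun w => by
    obtain ⟨a, l, hw⟩ := D.exists_mem_sheet w
    exact ⟨_, (D.sheet_open a l).mem_nhds hw, D.isOpenEmbedding_domRestrict_sheet a l⟩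

theorem t2Space (D : CoverData p) [T2Space X] : T2Space E := by
  refine ⟨fun w w' hne => ?_⟩
  by_cases hp : p w = p w'
  · obtain ⟨a, l, hl⟩ := D.exists_mem_sheet w
    have hw' : w' ∈ p ⁻¹' D.base a := by
      rw [mem_preimage, ← hp]
      exact D.sheet_subset_preimage_base a l hl
    rw [D.sheet_preimage] at hw'
    obtain ⟨l', hl'⟩ := mem_iUnion.mp hw'
    have hll' : l ≠ l' := by
      rintro rfl
      exact hne ((D.isOpenEmbedding_domRestrict_sheet a l).injective
        (a₁ := ⟨w, hl⟩) (a₂ := ⟨w', hl'⟩) hp |> congrArg Subtype.val)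
    exact ⟨_, _, D.sheet_open a l, D.sheet_open a l', hl, hl', D.sheet_disjoint a l l' hll'⟩
  · obtain ⟨u, v, hu, hv, hwu, hw'v, huv⟩ := t2_separation hp
    have hpc := D.isLocalHomeomorph.continuous
    exact ⟨p ⁻¹' u, p ⁻¹' v, hu.preimage hpc, hv.preimage hpc, hwu, hw'v, huv.preimage p⟩

theorem finite_Λ (D : CoverData p) (hfin : ∀ x : X, (p ⁻¹' {x}).Finite) {a : D.ι} {x : X}
    (hx : x ∈ D.base a) : Finite (D.Λ a) := by
  have hpt : ∀ l, ∃ w ∈ D.sheet a l, p w = x := fun l => by rwa [← D.image_sheet a l] at hx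
  choose f hf hpf using hpt
  have : Finite (p ⁻¹' {x}) := (hfin x).to_subtype
  refine Finite.of_injective (fun l => (⟨f l, hpf l⟩ : p ⁻¹' {x})) fun l l' h => ?_
  by_contra hne
  have hfl : f l = f l' := congrArg Subtype.val h
  exact disjoint_left.mp (D.sheet_disjoint a l l' hne) (hf l) (hfl ▸ hf l')

theorem isCompact_preimage (D : CoverData p) (hfin : ∀ x : X, (p ⁻¹' {x}).Finite) {a : D.ι}
    {K : Set X} (hK : IsCompact K) (hKa : K ⊆ D.base a) : IsCompact (p ⁻¹' K) := by
  rcases K.eq_empty_or_nonempty with rfl | ⟨x, hx⟩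
  · simp
  have := D.finite_Λ hfin (hKa hx)
  have hcover : p ⁻¹' K = ⋃ l, Subtype.val '' ((D.sheet a l).domRestrict p ⁻¹' K) := by
    simp_rw [domRestrict_eq, preimage_comp, Subtype.image_preimage_coe, ← iUnion_inter,
      ← D.sheet_preimage, ← preimage_inter, inter_eq_right.mpr hKa]
  rw [hcover]
  refine isCompact_iUnion fun l => ?_
  have hemb := D.isOpenEmbedding_domRestrict_sheet a l
  refine (hemb.isInducing.isCompact_preimage' hK ?_).image continuous_subtype_val
  rwa [range_domRestrict, D.image_sheet]

theorem compactSpace (D : CoverData p) [CompactSpace X] [LocallyCompactSpace X]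
    (hfin : ∀ x : X, (p ⁻¹' {x}).Finite) : CompactSpace E := by
  have hK : ∀ x : X, ∃ K ∈ 𝓝 x, IsCompact K ∧ ∃ a, K ⊆ D.base a := fun x => by
    obtain ⟨a, ha⟩ := D.base_cover x
    obtain ⟨K, hKx, hKa, hK⟩ := local_compact_nhds ((D.base_open a).mem_nhds ha)
    exact ⟨K, hKx, hK, a, hKa⟩
  choose K hKx hK a hKa using hK
  obtain ⟨t, -, ht⟩ := isCompact_univ.elim_nhds_subcover K fun x _ => hKx x
  refine ⟨?_⟩
  rw [← preimage_univ (f := p), ← univ_subset_iff.mp ht, preimage_iUnion₂]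
  exact t.finite_toSet.isCompact_biUnion fun x _ => D.isCompact_preimage hfin (hK x) (hKa x)

end CoverData

theorem IsOpenMap.exists_homeomorph_of_injOn {E X : Type*} [TopologicalSpace E]
    [TopologicalSpace X] {p : E → X} (hpo : IsOpenMap p) (hpc : Continuous p) {A : Set E}
    {B : Set X} (hA : IsOpen A) (hinj : A.InjOn p) (himg : p '' A = B) :
    ∃ e : A ≃ₜ B, ∀ z, (e z : X) = p z := by
  have hemb : IsOpenEmbedding (A.domRestrict p) :=
    .of_continuous_injective_isOpenMap (hpc.comp continuous_subtype_val) hinj.injective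
      (hpo.comp hA.isOpenMap_subtype_val)
  exact ⟨hemb.toHomeomorph.trans (.setCongr (by rw [range_domRestrict, himg])), fun _ => rfl⟩

section Uniform

variable {E X : Type*} [UniformSpace E] {p : E → X}

theorem IsLocallyInjective.setOf_eq_of_apply_eq_mem_uniformity [TopologicalSpace X]
    [CompactSpace E] (hp : IsLocallyInjective p) :
    {q : E × E | p q.1 = p q.2 → q.1 = q.2} ∈ 𝓤 E := by
  rw [← nhdsSet_diagonal_eq_uniformity, mem_nhdsSet_iff_forall]
  rintro ⟨w, w'⟩ (rfl : w = w')
  obtain ⟨U, hUo, hwU, hinj⟩ := hp w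
  rw [nhds_prod_eq]
  exact mem_of_superset (prod_mem_prod (hUo.mem_nhds hwU) (hUo.mem_nhds hwU))
    fun q hq => hinj hq.1 hq.2

theorem exists_pos_forall_ball_subset_image_ball [PseudoMetricSpace X] [CompactSpace E]
    (hpo : IsOpenMap p) (hpc : Continuous p) {V : SetRel E E} (hV : V ∈ 𝓤 E) :
    ∃ r > 0, ∀ w, Metric.ball (p w) r ⊆ p '' ball w V := by
  obtain ⟨V', hV', hV'V⟩ := comp_mem_uniformity_sets hV
  have hsmall :
      ∀ᶠ r in 𝓝 (0 : ℝ), ∀ w ∈ univ, Metric.ball (p w) r ⊆ p '' ball w V := by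
    refine isCompact_univ.eventually_forall_of_forall_eventually fun y _ => ?_
    obtain ⟨ε, hε, hεy⟩ :=
      Metric.mem_nhds_iff.mp (hpo.image_mem_nhds (ball_mem_nhds y hV'))
    have hnear : ∀ᶠ w in 𝓝 y, (w, y) ∈ V' ∧ dist (p w) (p y) < ε / 2 :=
      Eventually.and (mem_nhds_right y hV')
        ((hpc.tendsto y).eventually (Metric.ball_mem_nhds _ (half_pos hε)))
    rw [nhds_prod_eq]
    filter_upwards [prod_mem_prod (Iio_mem_nhds (half_pos hε)) hnear]
    rintro ⟨r, w⟩ ⟨hr, hwy, hdist⟩ x hx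
    have hxy : x ∈ Metric.ball (p y) ε := by
      have := dist_triangle x (p w) (p y)
      rw [Metric.mem_ball] at hx ⊢
      linarith [show r < ε / 2 from hr]
    obtain ⟨u, hu, rfl⟩ := hεy hxy
    exact ⟨u, hV'V (SetRel.prodMk_mem_comp hwy hu), rfl⟩
  obtain ⟨ε, hε, hr⟩ := Metric.eventually_nhds_iff.mp hsmall
  refine ⟨ε / 2, half_pos hε, fun w => hr ?_ w (mem_univ w)⟩
  rw [Real.dist_0_eq_abs, abs_of_pos (half_pos hε)]
  exact half_lt_self hε

theorem exists_isOpen_isSymm_comp_comp_comp_subset {W : SetRel E E} (hW : W ∈ 𝓤 E) :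
    ∃ V ∈ 𝓤 E, IsOpen V ∧ SetRel.IsSymm V ∧ V ○ V ○ V ○ V ⊆ W := by
  obtain ⟨V₀, hV₀, hV₀W⟩ := comp_mem_uniformity_sets hW
  obtain ⟨V, hV, hVo, hVs, hVV₀⟩ := comp_open_symm_mem_uniformity_sets hV₀
  refine ⟨V, hV, hVo, hVs, ?_⟩
  calc V ○ V ○ V ○ V = (V ○ V) ○ (V ○ V) := by rw [SetRel.comp_assoc]
    _ ⊆ V₀ ○ V₀ := SetRel.comp_subset_comp hVV₀ hVV₀
    _ ⊆ W := hV₀W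

end Uniform

section Overlay

variable {E X : Type} {p : E → X} {V : SetRel E E}

theorem eq_of_mem_ball_inter_ball [V.IsSymm]
    (hV : ∀ w w', (w, w') ∈ V ○ V ○ V ○ V → p w = p w' → w = w') {z w w' u v : E}
    (hu : u ∈ ball z V ∩ ball w V) (hv : v ∈ ball z V ∩ ball w' V) (hp : p w = p w') :
    w = w' :=
  hV w w' (SetRel.prodMk_mem_comp (SetRel.prodMk_mem_comp
    (SetRel.prodMk_mem_comp hu.2 (V.symm hu.1)) hv.1) (V.symm hv.2)) hp

theorem injOn_ball [V.IsRefl] [V.IsSymm]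
    (hV : ∀ w w', (w, w') ∈ V ○ V ○ V ○ V → p w = p w' → w = w') (z : E) :
    (ball z V).InjOn p := fun w hw w' hw' hp =>
  eq_of_mem_ball_inter_ball hV (u := w) (v := w') ⟨hw, V.rfl⟩ ⟨hw', V.rfl⟩ hp

variable [PseudoMetricSpace X] {r : ℝ}

theorem preimage_ball_eq_iUnion [V.IsSymm]
    (hball : ∀ w, Metric.ball (p w) r ⊆ p '' ball w V) (x : X) :
    p ⁻¹' Metric.ball x r = ⋃ z : p ⁻¹' {x}, ball (z : E) V ∩ p ⁻¹' Metric.ball x r := by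
  refine subset_antisymm (fun w hw => ?_) (iUnion_subset fun _ => inter_subset_right)
  obtain ⟨u, hu, hux⟩ := hball w (Metric.mem_ball_comm.mp hw)
  exact mem_iUnion.mpr ⟨⟨u, hux⟩, V.symm hu, hw⟩

theorem image_ball_inter_preimage_ball (hball : ∀ w, Metric.ball (p w) r ⊆ p '' ball w V)
    {z : E} {x : X} (hz : p z = x) :
    p '' (ball z V ∩ p ⁻¹' Metric.ball x r) = Metric.ball x r := by
  refine (image_subset_iff.mpr inter_subset_right).antisymm fun y hy => ?_
  obtain ⟨u, hu, rfl⟩ := hball z (hz ▸ hy)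
  exact ⟨u, ⟨hu, hy⟩, rfl⟩

variable [UniformSpace E]

theorem exists_overlayStructure_of_entourage (hpo : IsOpenMap p) (hpc : Continuous p)
    (hVo : IsOpen V) [V.IsRefl] [V.IsSymm]
    (hV : ∀ w w', (w, w') ∈ V ○ V ○ V ○ V → p w = p w' → w = w') (hr : 0 < r)
    (hball : ∀ w, Metric.ball (p w) r ⊆ p '' ball w V) :
    ∃ O : OverlayStructure p, ∀ a l, ∃ w, O.sheet a l ⊆ ball w V := by
  have hsheet_open : ∀ (x : X) (z : E), IsOpen (ball z V ∩ p ⁻¹' Metric.ball x r) :=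
    fun _ z => (isOpen_ball z hVo).inter (Metric.isOpen_ball.preimage hpc)
  refine ⟨{
    ι := X
    base := fun x => Metric.ball x r
    base_open := fun _ => Metric.isOpen_ball
    base_cover := fun x => ⟨x, Metric.mem_ball_self hr⟩
    Λ := fun x => p ⁻¹' {x}
    sheet := fun x z => ball (z : E) V ∩ p ⁻¹' Metric.ball x r
    sheet_open := fun x z => hsheet_open x z
    sheet_disjoint := fun x z z' hne => disjoint_left.mpr fun u hu hu' =>
      hne (Subtype.ext (eq_of_mem_ball_inter_ball hV ⟨hu.1, hu.1⟩ ⟨hu.1, hu'.1⟩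
        (z.2.trans z'.2.symm)))
    sheet_preimage := preimage_ball_eq_iUnion hball
    sheet_homeo := fun x z => hpo.exists_homeomorph_of_injOn hpc (hsheet_open x z)
      ((injOn_ball hV z).mono inter_subset_left) (image_ball_inter_preimage_ball hball z.2)
    overlay := fun x y z w w' ⟨u, hu, hu'⟩ ⟨v, hv, hv'⟩ =>
      Subtype.ext (eq_of_mem_ball_inter_ball hV ⟨hu.1, hu'.1⟩ ⟨hv.1, hv'.1⟩
        (w.2.trans w'.2.symm)) }, fun x z => ⟨z, inter_subset_left⟩⟩

theorem IsLocalHomeomorph.exists_overlayStructure_sheet_subset_ball [CompactSpace E]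
    (hp : IsLocalHomeomorph p) {W : SetRel E E} (hW : W ∈ 𝓤 E) :
    ∃ O : OverlayStructure p, ∀ a l, ∃ w, O.sheet a l ⊆ ball w W := by
  obtain ⟨V, hV, hVo, hVs, hVW⟩ := exists_isOpen_isSymm_comp_comp_comp_subset
    (inter_mem hW hp.isLocallyInjective.setOf_eq_of_apply_eq_mem_uniformity)
  have := isRefl_of_mem_uniformity hV
  obtain ⟨r, hr, hball⟩ :=
    exists_pos_forall_ball_subset_image_ball hp.isOpenMap hp.continuous hV
  obtain ⟨O, hO⟩ := exists_overlayStructure_of_entourage hp.isOpenMap hp.continuous hVo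
    (fun w w' h => (hVW h).2) hr hball
  have hV4 : V ⊆ V ○ V ○ V ○ V :=
    SetRel.left_subset_comp.trans (SetRel.left_subset_comp.trans SetRel.left_subset_comp)
  exact ⟨O, fun a l => (hO a l).imp fun w hw =>
    hw.trans (ball_mono (fun q hq => (hVW (hV4 hq)).1) w)⟩

end Overlay

theorem CoverData.exists_mem_uniformity_ball_subset_sheet {E X : Type} [UniformSpace E]
    [CompactSpace E] [TopologicalSpace X] {p : E → X} (D : CoverData p) :
    ∃ V ∈ 𝓤 E, ∀ w, ∃ a l, ball w V ⊆ D.sheet a l := by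
  obtain ⟨V, hV, hVD⟩ := lebesgue_number_lemma (U := fun q : Σ a, D.Λ a => D.sheet q.1 q.2)
    isCompact_univ (fun q => D.sheet_open q.1 q.2) fun w _ => by
      obtain ⟨a, l, hw⟩ := D.exists_mem_sheet w
      exact mem_iUnion.mpr ⟨⟨a, l⟩, hw⟩
  refine ⟨V, hV, fun w => ?_⟩
  obtain ⟨q, hq⟩ := hVD w (mem_univ w)
  exact ⟨q.1, q.2, hq⟩

theorem IsLocalHomeomorph.exists_overlayStructure_refining {E X : Type} [UniformSpace E]
    [CompactSpace E] [PseudoMetricSpace X] {p : E → X} (hp : IsLocalHomeomorph p)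
    (D₁ D₂ : CoverData p) :
    ∃ O : OverlayStructure p, (∀ a l, ∃ b m, O.sheet a l ⊆ D₁.sheet b m) ∧
      ∀ a l, ∃ b m, O.sheet a l ⊆ D₂.sheet b m := by
  obtain ⟨V₁, hV₁, h₁⟩ := D₁.exists_mem_uniformity_ball_subset_sheet
  obtain ⟨V₂, hV₂, h₂⟩ := D₂.exists_mem_uniformity_ball_subset_sheet
  obtain ⟨O, hO⟩ := hp.exists_overlayStructure_sheet_subset_ball (inter_mem hV₁ hV₂)
  refine ⟨O, fun a l => ?_, fun a l => ?_⟩ <;> obtain ⟨w, hw⟩ := hO a l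
  · obtain ⟨b, m, h⟩ := h₁ w
    exact ⟨b, m, hw.trans ((ball_mono inter_subset_left w).trans h)⟩
  · obtain ⟨b, m, h⟩ := h₂ w
    exact ⟨b, m, hw.trans ((ball_mono inter_subset_right w).trans h)⟩

theorem overlayStructure_exists_unique_of_finite_fibers_general
    {E X : Type} [TopologicalSpace E] [MetricSpace X] [CompactSpace X]
    (p : E → X) (hcov : Nonempty (CoverData p))
    (hfin : ∀ x : X, (p ⁻¹' {x}).Finite) :
    Nonempty (OverlayStructure p) ∧
      ∀ O O' : OverlayStructure p, O.Equiv O' := by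
  obtain ⟨D⟩ := hcov
  have := D.t2Space
  have := D.compactSpace hfin
  let : UniformSpace E := uniformSpaceOfCompactR1
  have hp := D.isLocalHomeomorph
  refine ⟨?_, fun O O' => ?_⟩
  · obtain ⟨O, -⟩ := hp.exists_overlayStructure_refining D D
    exact ⟨O⟩
  · obtain ⟨O'', h, h'⟩ := hp.exists_overlayStructure_refining O.toCoverData O'.toCoverData
    exact ⟨O'', h, h'⟩

/-- Over a compact metric space, every finite-sheeted covering map admits an
overlay structure, and any two overlay structures on it are equivalent. -/
theorem overlayStructure_exists_unique_of_finite_fibers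
    {E X : Type} [TopologicalSpace E] [MetricSpace X] [CompactSpace X]
    (p : E → X) (hcont : Continuous p) (hsurj : Function.Surjective p)
    (hcov : Nonempty (CoverData p))
    (hfin : ∀ x : X, (p ⁻¹' {x}).Finite) :
    Nonempty (OverlayStructure p) ∧
      ∀ O O' : OverlayStructure p, O.Equiv O' :=
  overlayStructure_exists_unique_of_finite_fibers_general p hcov hfin
end
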